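/- Let x = (x_n)_{n≥2} be a sequence with x_n ∈ {1,…,n}, let n₀ ≥ 2, and let R > 0 satisfy R ≤ ∑_{i=3}^{n₀+1} e^{i²}. Then the open ball B_{M_x}(P⁺_{x,2}, R) in (M_x, d_x) is contained in ⋃_{n=2}^{n₀} M_{x,n}. -/

import Mathlib

noncomputable section

/-- The tree distance on `ℝ²`. -/
def treeDist (p q : ℝ × ℝ) : ℝ :=
  if p.1 = q.1 then |p.2 - q.2| else |p.2| + |p.1 - q.1| + |q.2|

/-- `∑_{i=2}^n e^{i²}`. -/
def expSum (n : ℕ) : ℝ := ∑ i ∈ Finset.Icc 2 n, Real.exp ((i : ℝ) ^ 2)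

/-- `P⁺_{x,n} = (∑_{i=2}^n e^{i²}, e^{x_n})`. -/
def Pp (x : ℕ → ℕ) (n : ℕ) : ℝ × ℝ := (expSum n, Real.exp (x n))

/-- `P⁻_{x,n} = (∑_{i=2}^n e^{i²}, −e^{x_n})`. -/
def Pm (x : ℕ → ℕ) (n : ℕ) : ℝ × ℝ := (expSum n, -Real.exp (x n))

/-- `M_{x,n} = {P⁺_{x,n}, P⁻_{x,n}}`. -/
def Mpart (x : ℕ → ℕ) (n : ℕ) : Set (ℝ × ℝ) := {Pp x n, Pm x n}

/-- `M_x = ⋃_{n≥2} M_{x,n}`. -/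
def Mset (x : ℕ → ℕ) : Set (ℝ × ℝ) := ⋃ n ∈ {m : ℕ | 2 ≤ m}, Mpart x n

/-- `x = (x_n)_{n≥2}` is a sequence with `x_n ∈ {1,…,n}`. -/
def SeqOK (x : ℕ → ℕ) : Prop := ∀ n, 2 ≤ n → 1 ≤ x n ∧ x n ≤ n

/-- `A` is a `C`-net in `(M_x, d_x)`: `A ⊆ M_x` and every point of `M_x` is at
distance (infimum) at most `C` from `A`. -/
def IsNet (x : ℕ → ℕ) (C : ℝ) (A : Set (ℝ × ℝ)) : Prop :=
  A ⊆ Mset x ∧ ∀ p ∈ Mset x, ∀ ε > 0, ∃ a ∈ A, treeDist p a ≤ C + ε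

/-- `φ : A → B` is a `λ`-bi-Lipschitz bijection. -/
def IsBiLipOn (lam : ℝ) (A B : Set (ℝ × ℝ)) (φ : ℝ × ℝ → ℝ × ℝ) : Prop :=
  Set.BijOn φ A B ∧ ∀ p ∈ A, ∀ q ∈ A,
    lam⁻¹ * treeDist p q ≤ treeDist (φ p) (φ q) ∧
    treeDist (φ p) (φ q) ≤ lam * treeDist p q

/-!
A point of `M_{x,n}` has first coordinate `∑_{i=2}^n e^{i²}`, and the tree distance dominates the
distance of first coordinates. So a point of `M_{x,n}` with `n > n₀` lies at distance at least
`∑_{i=3}^{n} e^{i²} ≥ ∑_{i=3}^{n₀+1} e^{i²} ≥ R` from `P⁺_{x,2}`.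
-/

lemma abs_fst_sub_le_treeDist (p q : ℝ × ℝ) : |p.1 - q.1| ≤ treeDist p q := by
  unfold treeDist
  split_ifs with h
  · simp [h]
  · linarith [abs_nonneg p.2, abs_nonneg q.2]

lemma expSum_sub_expSum {m n : ℕ} (hm : 1 ≤ m) (hmn : m ≤ n) :
    expSum n - expSum m = ∑ i ∈ Finset.Icc (m + 1) n, Real.exp ((i : ℝ) ^ 2) := by
  have hIcc : ∀ k, Finset.Icc 2 k = Finset.Ioc 1 k := fun k => Finset.Icc_add_one_left_eq_Ioc 1 k
  rw [expSum, expSum, hIcc, hIcc, Finset.Icc_add_one_left_eq_Ioc, sub_eq_iff_eq_add',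
    Finset.sum_Ioc_consecutive _ hm hmn]

lemma fst_of_mem_Mpart {x : ℕ → ℕ} {n : ℕ} {p : ℝ × ℝ} (hp : p ∈ Mpart x n) :
    p.1 = expSum n := by
  rcases hp with rfl | rfl <;> rfl

theorem ball_subset_union_Mpart_general (x : ℕ → ℕ) (n₀ : ℕ)
    (R : ℝ) (hR : R ≤ ∑ i ∈ Finset.Icc 3 (n₀ + 1), Real.exp ((i : ℝ) ^ 2)) :
    {p ∈ Mset x | treeDist (Pp x 2) p < R} ⊆ ⋃ n ∈ Finset.Icc 2 n₀, Mpart x n := by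
  rintro p ⟨hpM, hd⟩
  obtain ⟨n, hn2, hp⟩ : ∃ n, 2 ≤ n ∧ p ∈ Mpart x n := by simpa [Mset] using hpM
  refine Set.mem_biUnion (Finset.mem_Icc.2 ⟨hn2, ?_⟩) hp
  by_contra! hn
  have hfar : ∑ i ∈ Finset.Icc 3 n, Real.exp ((i : ℝ) ^ 2) ≤ treeDist (Pp x 2) p :=
    calc ∑ i ∈ Finset.Icc 3 n, Real.exp ((i : ℝ) ^ 2) = p.1 - (Pp x 2).1 := by
          rw [fst_of_mem_Mpart hp, ← expSum_sub_expSum (by norm_num) hn2]; rfl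
      _ ≤ |(Pp x 2).1 - p.1| := by rw [abs_sub_comm]; exact le_abs_self _
      _ ≤ treeDist (Pp x 2) p := abs_fst_sub_le_treeDist _ _
  have hmono : ∑ i ∈ Finset.Icc 3 (n₀ + 1), Real.exp ((i : ℝ) ^ 2) ≤
      ∑ i ∈ Finset.Icc 3 n, Real.exp ((i : ℝ) ^ 2) :=
    Finset.sum_le_sum_of_subset_of_nonneg (Finset.Icc_subset_Icc_right hn)
      fun _ _ _ => (Real.exp_pos _).le
  linarith

/-- If `0 < R ≤ ∑_{i=3}^{n₀+1} e^{i²}`, the open ball `B_{M_x}(P⁺_{x,2}, R)` is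
contained in `⋃_{n=2}^{n₀} M_{x,n}`. -/
theorem ball_subset_union_Mpart (x : ℕ → ℕ) (hx : SeqOK x) (n₀ : ℕ) (hn₀ : 2 ≤ n₀)
    (R : ℝ) (hR0 : 0 < R) (hR : R ≤ ∑ i ∈ Finset.Icc 3 (n₀ + 1), Real.exp ((i : ℝ) ^ 2)) :
    {p ∈ Mset x | treeDist (Pp x 2) p < R} ⊆ ⋃ n ∈ Finset.Icc 2 n₀, Mpart x n :=
  ball_subset_union_Mpart_general x n₀ R hR
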